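/- Let T be a set of TGDs with the bounded derivation depth property, T₀ ⊆ T the subset of joinless rules of T, and suppose the joinless theory T₀ has the finite controllability property. Suppose also that for every weakly saturated pair (M, T) (i.e., M ⊨ T₀) and every UCQ Φ with Chase(M, T) ⊭ Φ there is a finite model N ⊨ M, T with N ⊭ Φ. Then for every finite database D and UCQ Φ with Chase(D, T) ⊭ Φ there is a finite model M ⊨ D, T with M ⊭ Φ. -/

import Mathlib

/-- A relational signature: relation symbols with arities. -/
structure Sig where
  Rel : Type
  ar : Rel → ℕ

/-- A relational structure over a signature. -/
structure Struc (S : Sig) where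
  carrier : Type
  interp : ∀ r : S.Rel, (Fin (S.ar r) → carrier) → Prop

/-- A conjunctive query: a finite set of variables and a list of atoms. -/
structure CQ (S : Sig) where
  nvars : ℕ
  atoms : List (Σ r : S.Rel, Fin (S.ar r) → Fin nvars)

/-- Satisfaction of a conjunctive query (existential closure of the conjunction of atoms). -/
def Struc.satCQ {S : Sig} (M : Struc S) (φ : CQ S) : Prop :=
  ∃ v : Fin φ.nvars → M.carrier, ∀ a ∈ φ.atoms, M.interp a.1 (fun i => v (a.2 i))

/-- Satisfaction of a union of conjunctive queries (a finite disjunction, given as a list). -/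
def Struc.satUCQ {S : Sig} (M : Struc S) (Φ : List (CQ S)) : Prop :=
  ∃ φ ∈ Φ, M.satCQ φ


/-- A tuple-generating dependency `∀x̄ (Φ(x̄) → ∃y Q(y,ȳ))`. -/
structure TGD (S : Sig) where
  body : CQ S
  head : S.Rel
  hmap : Fin (S.ar head) → Option (Fin body.nvars)

/-- Satisfaction of a TGD in a structure. -/
def Struc.satTGD {S : Sig} (M : Struc S) (t : TGD S) : Prop :=
  ∀ v : Fin t.body.nvars → M.carrier,
    (∀ a ∈ t.body.atoms, M.interp a.1 (fun i => v (a.2 i))) →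
    ∃ y : M.carrier, M.interp t.head (fun i => (t.hmap i).elim y v)

/-- A TGD is joinless if no variable occurs twice in its body. -/
def Joinless {S : Sig} (t : TGD S) : Prop :=
  (∀ a ∈ t.body.atoms, Function.Injective a.2) ∧
  t.body.atoms.Pairwise (fun a b => ∀ i j, a.2 i ≠ b.2 j)

/-- Homomorphism of relational structures (`N ⊨ M` for instances: `M` maps into `N`). -/
def IsHom {S : Sig} (C M : Struc S) (h : C.carrier → M.carrier) : Prop :=
  ∀ r b, C.interp r b → M.interp r (fun i => h (b i))

/-! Rewrite the query `Φ` over the chase into `Ψ̄` by BDD. Since `Chase(Chase(D,T₀),T) = Chase(D,T)`,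
`Chase(D,T₀) ⊭ Ψ̄`, so finite controllability of `T₀` gives a finite `M ⊨ T₀` receiving `D` with
`M ⊭ Ψ̄`, i.e. `Chase(M,T) ⊭ Φ`. The pair `(M,T)` is weakly saturated, so the hypothesis yields a
finite model of `M` and `T` avoiding `Φ`, and it receives `D` through `M`. -/

theorem IsHom.comp {S : Sig} {C M N : Struc S} {g : M.carrier → N.carrier}
    {h : C.carrier → M.carrier} (hg : IsHom M N g) (hh : IsHom C M h) : IsHom C N (g ∘ h) :=
  fun r b hb => hg r _ (hh r b hb)

def WeaklySaturated {S : Sig} (T : Set (TGD S)) (M : Struc S) : Prop :=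
  ∀ t ∈ T, Joinless t → M.satTGD t

theorem exists_weaklySaturated_of_not_satUCQ_chase {S : Sig} {T : Set (TGD S)}
    {ChT Ch0 : Struc S → Struc S}
    (hBDD : ∀ Ψ : List (CQ S), ∃ Ψb : List (CQ S),
      ∀ F : Struc S, (ChT F).satUCQ Ψ ↔ F.satUCQ Ψb)
    (hFC0 : ∀ D : Struc S, Finite D.carrier → ∀ Ψ : List (CQ S),
      ¬ (Ch0 D).satUCQ Ψ →
      ∃ M : Struc S, Finite M.carrier ∧ WeaklySaturated T M ∧
        (∃ h : D.carrier → M.carrier, IsHom D M h) ∧ ¬ M.satUCQ Ψ)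
    (hcomp : ∀ (F : Struc S) (Ψ : List (CQ S)),
      (ChT (Ch0 F)).satUCQ Ψ ↔ (ChT F).satUCQ Ψ)
    {D : Struc S} (hD : Finite D.carrier) {Φ : List (CQ S)} (hΦ : ¬ (ChT D).satUCQ Φ) :
    ∃ M : Struc S, Finite M.carrier ∧ WeaklySaturated T M ∧
      (∃ h : D.carrier → M.carrier, IsHom D M h) ∧ ¬ (ChT M).satUCQ Φ := by
  obtain ⟨Ψb, hΨb⟩ := hBDD Φ
  have hΨb_D : ¬ (Ch0 D).satUCQ Ψb := by rwa [← hΨb, hcomp]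
  obtain ⟨M, hM, hMsat, hDM, hMΨb⟩ := hFC0 D hD Ψb hΨb_D
  exact ⟨M, hM, hMsat, hDM, by rwa [hΨb]⟩

-- `ChT`, `Ch0` are the chase operators of `T` and of its joinless part `T₀`; `hcomp` encodes
-- `Chase(Chase(D,T₀),T) = Chase(D,T)`.
/-- Let `T` be a set of TGDs with the BDD property (witnessed by the chase
operator `ChT` of `T`), let `T₀` be the joinless rules of `T` (with chase operator `Ch0`),
and suppose `T₀` has the finite controllability property.  Suppose moreover that for every
weakly saturated pair `(M,T)` (finite `M ⊨ T₀`) and UCQ `Φ` with `Chase(M,T) ⊭ Φ` there is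
a finite model `N ⊨ M, T` with `N ⊭ Φ`.  Then for every finite database `D` and UCQ `Φ`
with `Chase(D,T) ⊭ Φ` there is a finite model `M ⊨ D, T` with `M ⊭ Φ`.
(The hypothesis `hcomp` records the chase identity `Chase(Chase(D,T₀),T) = Chase(D,T)`.) -/
theorem stmt17 {S : Sig} (T : Set (TGD S)) (ChT Ch0 : Struc S → Struc S)
    (hBDD : ∀ Ψ : List (CQ S), ∃ Ψb : List (CQ S),
      ∀ F : Struc S, (ChT F).satUCQ Ψ ↔ F.satUCQ Ψb)
    (hFC0 : ∀ D : Struc S, Finite D.carrier → ∀ Ψ : List (CQ S),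
      ¬ (Ch0 D).satUCQ Ψ →
      ∃ M : Struc S, Finite M.carrier ∧ (∀ t ∈ T, Joinless t → M.satTGD t) ∧
        (∃ h : D.carrier → M.carrier, IsHom D M h) ∧ ¬ M.satUCQ Ψ)
    (hcomp : ∀ (F : Struc S) (Ψ : List (CQ S)),
      (ChT (Ch0 F)).satUCQ Ψ ↔ (ChT F).satUCQ Ψ)
    (hWS : ∀ M : Struc S, Finite M.carrier → (∀ t ∈ T, Joinless t → M.satTGD t) →
      ∀ Φ : List (CQ S), ¬ (ChT M).satUCQ Φ →
      ∃ N : Struc S, Finite N.carrier ∧ (∃ h : M.carrier → N.carrier, IsHom M N h) ∧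
        (∀ t ∈ T, N.satTGD t) ∧ ¬ N.satUCQ Φ) :
    ∀ D : Struc S, Finite D.carrier → ∀ Φ : List (CQ S), ¬ (ChT D).satUCQ Φ →
      ∃ M : Struc S, Finite M.carrier ∧ (∃ h : D.carrier → M.carrier, IsHom D M h) ∧
        (∀ t ∈ T, M.satTGD t) ∧ ¬ M.satUCQ Φ := by
  intro D hD Φ hΦ
  obtain ⟨M, hM, hMsat, ⟨h, hh⟩, hMΦ⟩ :=
    exists_weaklySaturated_of_not_satUCQ_chase hBDD hFC0 hcomp hD hΦ
  obtain ⟨N, hN, ⟨g, hg⟩, hNT, hNΦ⟩ := hWS M hM hMsat Φ hMΦ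
  exact ⟨N, hN, ⟨g ∘ h, hg.comp hh⟩, hNT, hNΦ⟩
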